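/- Any tripartite correlation of the form P(abc|xyz) = Σ_λ q_λ P(a|x,ρ_A^λ)P(b|y,ρ_B^λ)P_λ(c|z), where Alice and Bob both measure σₓ (for x,y=0) and σ_y (for x,y=1) on single-qubit states, satisfies the Mermin expression bound ⟨M⟩ = ⟨A₀B₀C₁⟩+⟨A₀B₁C₀⟩+⟨A₁B₀C₀⟩−⟨A₁B₁C₁⟩ ≤ √2. -/

import Mathlib

/-!
For each hidden variable the correlators factorise, and the Mermin expression becomes
`c₀ s + c₁ t` with `s = a₀b₁ + a₁b₀`, `t = a₀b₀ - a₁b₁`, where `(a₀, a₁)` and `(b₀, b₁)` are the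
`(σₓ, σ_y)` expectations of Alice's and Bob's qubits and `|c_z| ≤ 1`. Since
`t + i s = (a₀ + i a₁)(b₀ + i b₁)` and both points lie in the unit disk (`det ρ ≥ 0` gives
`|ρ₀₁|² ≤ ρ₀₀ρ₁₁ ≤ 1/4`), `s² + t² ≤ 1`, hence `c₀ s + c₁ t ≤ |s| + |t| ≤ √2`; averaging over the
hidden variable keeps the bound.
-/

open Matrix ComplexOrder

noncomputable def σx : Matrix (Fin 2) (Fin 2) ℂ := !![0, 1; 1, 0]
noncomputable def σy : Matrix (Fin 2) (Fin 2) ℂ := !![0, -Complex.I; Complex.I, 0]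

/-- Observables σₓ (for input 0) and σ_y (for input 1), for both Alice and Bob. -/
noncomputable def Aobs : Fin 2 → Matrix (Fin 2) (Fin 2) ℂ := fun x => if x = 0 then σx else σy

/-- The projector onto the `(-1)^a` eigenspace of a ±1-valued observable `O`. -/
noncomputable def proj (O : Matrix (Fin 2) (Fin 2) ℂ) (a : Fin 2) : Matrix (Fin 2) (Fin 2) ℂ :=
  (2 : ℂ)⁻¹ • (1 + ((-1 : ℂ) ^ (a : ℕ)) • O)

/-- The probability of outcome `a` when measuring observable `O` on qubit state `ρ`. -/
noncomputable def probOf (O : Matrix (Fin 2) (Fin 2) ℂ) (a : Fin 2)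
    (ρ : Matrix (Fin 2) (Fin 2) ℂ) : ℝ := ((proj O a * ρ).trace).re

/-- The correlator ⟨A_x B_y C_z⟩ of a tripartite correlation `P`. -/
noncomputable def corr (P : Fin 2 → Fin 2 → Fin 2 → Fin 2 → Fin 2 → Fin 2 → ℝ)
    (x y z : Fin 2) : ℝ :=
  ∑ a : Fin 2, ∑ b : Fin 2, ∑ c : Fin 2,
    (-1 : ℝ) ^ ((a + b + c : Fin 2) : ℕ) * P a b c x y z

/-- The Mermin expression of a tripartite correlation `P`. -/
noncomputable def Mexpr (P : Fin 2 → Fin 2 → Fin 2 → Fin 2 → Fin 2 → Fin 2 → ℝ) : ℝ :=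
  corr P 0 0 1 + corr P 0 1 0 + corr P 1 0 0 - corr P 1 1 1

theorem neg_one_pow_val_add_fin_two {R : Type*} [Ring R] (a b : Fin 2) :
    (-1 : R) ^ ((a + b : Fin 2) : ℕ) = (-1) ^ (a : ℕ) * (-1) ^ (b : ℕ) := by
  rw [Fin.val_add, ← neg_one_pow_eq_pow_mod_two, pow_add]

def merminProduct (a b c : Fin 2 → ℝ) : ℝ :=
  a 0 * b 0 * c 1 + a 0 * b 1 * c 0 + a 1 * b 0 * c 0 - a 1 * b 1 * c 1

theorem Mexpr_eq_sum_of_local {n : ℕ} (q : Fin n → ℝ) (pA pB pC : Fin n → Fin 2 → Fin 2 → ℝ)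
    (P : Fin 2 → Fin 2 → Fin 2 → Fin 2 → Fin 2 → Fin 2 → ℝ)
    (hP : ∀ a b c x y z, P a b c x y z = ∑ l, q l * pA l a x * pB l b y * pC l c z) :
    Mexpr P = ∑ l, q l * merminProduct (fun x => pA l 0 x - pA l 1 x)
      (fun y => pB l 0 y - pB l 1 y) (fun z => pC l 0 z - pC l 1 z) := by
  simp only [Mexpr, corr, merminProduct, hP, neg_one_pow_val_add_fin_two, Finset.mul_sum,
    Fin.sum_univ_two, ← Finset.sum_add_distrib, ← Finset.sum_sub_distrib, Fin.val_zero, Fin.val_one,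
    pow_zero, pow_one]
  refine Finset.sum_congr rfl fun l _ => ?_
  ring

theorem abs_add_abs_le_sqrt_two {s t : ℝ} (h : s ^ 2 + t ^ 2 ≤ 1) : |s| + |t| ≤ √2 :=
  (Real.le_sqrt (by positivity) zero_le_two).mpr
    (by nlinarith [sq_abs s, sq_abs t, sq_nonneg (|s| - |t|)])

theorem merminProduct_le_sqrt_two {a b c : Fin 2 → ℝ} (ha : a 0 ^ 2 + a 1 ^ 2 ≤ 1)
    (hb : b 0 ^ 2 + b 1 ^ 2 ≤ 1) (hc : ∀ z, |c z| ≤ 1) : merminProduct a b c ≤ √2 := by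
  set s := a 0 * b 1 + a 1 * b 0
  set t := a 0 * b 0 - a 1 * b 1
  have hst : s ^ 2 + t ^ 2 ≤ 1 :=
    calc s ^ 2 + t ^ 2 = (a 0 ^ 2 + a 1 ^ 2) * (b 0 ^ 2 + b 1 ^ 2) := by ring
      _ ≤ 1 := mul_le_one₀ ha (by positivity) hb
  have hmul : ∀ z r, c z * r ≤ |r| := fun z r =>
    (le_abs_self _).trans (by rw [abs_mul]; exact mul_le_of_le_one_left (abs_nonneg r) (hc z))
  calc merminProduct a b c = c 0 * s + c 1 * t := by unfold merminProduct; ring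
    _ ≤ |s| + |t| := add_le_add (hmul 0 s) (hmul 1 t)
    _ ≤ √2 := abs_add_abs_le_sqrt_two hst

theorem abs_sub_le_one_of_sum_eq_one {p : Fin 2 → ℝ} (hp : ∀ i, 0 ≤ p i) (h1 : ∑ i, p i = 1) :
    |p 0 - p 1| ≤ 1 := by
  rw [Fin.sum_univ_two] at h1
  rw [abs_le]
  constructor <;> linarith [hp 0, hp 1]

theorem proj_zero_sub_proj_one (O : Matrix (Fin 2) (Fin 2) ℂ) : proj O 0 - proj O 1 = O := by
  simp only [proj, Fin.val_zero, Fin.val_one, pow_zero, pow_one, one_smul, neg_one_smul]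
  module

theorem probOf_zero_sub_probOf_one (O ρ : Matrix (Fin 2) (Fin 2) ℂ) :
    probOf O 0 ρ - probOf O 1 ρ = (O * ρ).trace.re := by
  rw [probOf, probOf, ← Complex.sub_re, ← trace_sub, ← sub_mul, proj_zero_sub_proj_one]

theorem Matrix.PosSemidef.re_trace_σx_mul_sq_add_re_trace_σy_mul_sq_le_one
    {ρ : Matrix (Fin 2) (Fin 2) ℂ} (hρ : ρ.PosSemidef) (htr : ρ.trace = 1) :
    (σx * ρ).trace.re ^ 2 + (σy * ρ).trace.re ^ 2 ≤ 1 := by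
  have h10 : ρ 1 0 = star (ρ 0 1) := (hρ.isHermitian.apply 1 0).symm
  have h00 : (ρ 0 0).im = 0 := Complex.conj_eq_iff_im.mp (hρ.isHermitian.apply 0 0)
  have h11 : (ρ 1 1).im = 0 := Complex.conj_eq_iff_im.mp (hρ.isHermitian.apply 1 1)
  have hx : (σx * ρ).trace.re = 2 * (ρ 0 1).re := by
    simp [σx, trace_fin_two, vecMul, dotProduct, h10, two_mul]
  have hy : (σy * ρ).trace.re = -2 * (ρ 0 1).im := by
    simp [σy, trace_fin_two, vecMul, dotProduct, h10, two_mul]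
  have hsum : (ρ 0 0).re + (ρ 1 1).re = 1 := by
    simpa [trace_fin_two] using congrArg Complex.re htr
  have hdet : (ρ 0 1).re ^ 2 + (ρ 0 1).im ^ 2 ≤ (ρ 0 0).re * (ρ 1 1).re := by
    simpa [det_fin_two, h10, h00, h11, sq] using (Complex.le_def.mp hρ.det_nonneg).1
  rw [hx, hy]
  nlinarith [sq_nonneg ((ρ 0 0).re - (ρ 1 1).re)]

theorem stmt10 (n : ℕ) (q : Fin n → ℝ) (hq : ∀ l, 0 ≤ q l) (hq1 : ∑ l, q l = 1)
    (ρA ρB : Fin n → Matrix (Fin 2) (Fin 2) ℂ)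
    (hρA : ∀ l, (ρA l).PosSemidef ∧ (ρA l).trace = 1)
    (hρB : ∀ l, (ρB l).PosSemidef ∧ (ρB l).trace = 1)
    (Pc : Fin n → Fin 2 → Fin 2 → ℝ)
    (hPc : ∀ l c z, 0 ≤ Pc l c z) (hPc1 : ∀ l z, ∑ c : Fin 2, Pc l c z = 1)
    (P : Fin 2 → Fin 2 → Fin 2 → Fin 2 → Fin 2 → Fin 2 → ℝ)
    (hP : ∀ a b c x y z, P a b c x y z =
      ∑ l, q l * probOf (Aobs x) a (ρA l) * probOf (Aobs y) b (ρB l) * Pc l c z) :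
    Mexpr P ≤ Real.sqrt 2 := by
  have hdisk : ∀ ρ : Matrix (Fin 2) (Fin 2) ℂ, ρ.PosSemidef ∧ ρ.trace = 1 →
      (probOf (Aobs 0) 0 ρ - probOf (Aobs 0) 1 ρ) ^ 2
        + (probOf (Aobs 1) 0 ρ - probOf (Aobs 1) 1 ρ) ^ 2 ≤ 1 := fun ρ h => by
    simpa [probOf_zero_sub_probOf_one, Aobs] using
      h.1.re_trace_σx_mul_sq_add_re_trace_σy_mul_sq_le_one h.2
  rw [Mexpr_eq_sum_of_local q (fun l a x => probOf (Aobs x) a (ρA l))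
    (fun l b y => probOf (Aobs y) b (ρB l)) Pc P hP]
  calc _ ≤ ∑ l, q l * √2 := Finset.sum_le_sum fun l _ =>
        mul_le_mul_of_nonneg_left (merminProduct_le_sqrt_two (hdisk _ (hρA l)) (hdisk _ (hρB l))
          fun z => abs_sub_le_one_of_sum_eq_one (hPc l · z) (hPc1 l z)) (hq l)
    _ = √2 := by rw [← Finset.sum_mul, hq1, one_mul]
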